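/- arXiv:1911.08339 — 3 statements merged into one kernel-verified Lean document; each statement's English description precedes it below -/
import Mathlib

section
/- For any $a_1,\dots,a_k \in [0,1]$, any probability distribution $\pi$ on $[k]$, and any $\beta \in (0,1]$, there exists a set $S \subseteq [k]$ such that $\pi(S) \cdot \min_{v \in S} a_v \ge \frac{\sum_{v=1}^k \pi(v) a_v - \beta}{2\log_2(1/\beta)}$. -/
/-!
Let `M` be the largest value of `π {u | a u ≥ a v} * a v`, attained at `v₀`; the superlevel set
`S = {u | a u ≥ a v₀}` then has `π(S) * min_S a ≥ M`. Conversely, by the layer-cake formula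
`∑ π v a v = ∫₀¹ π {a ≥ t} dt ≤ β + ∫_β^1 M / t dt = β + M log (1/β)`, proved discretely by peeling
off the minimum of `a` one point at a time; finally `log x ≤ 2 log₂ x` for `x ≥ 1`.
-/

open Finset
open Real (log logb log_nonneg log_pos log_mul logb_nonneg one_sub_inv_le_log_of_pos log_two_lt_d9)

/-- One layer of the discretised integral `∫_β^m M / t dt ≥ (m - β) π(T)`. -/
lemma mul_add_mul_log_one_div_le {m β P M : ℝ} (hβ : 0 < β) (hβm : β ≤ m) (hP : 0 ≤ P)
    (hmP : m * P ≤ M) :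
    m * P + M * log (1 / m) ≤ β * P + M * log (1 / β) := by
  have hm : 0 < m := hβ.trans_le hβm
  have hlog : 1 - β / m ≤ log (m / β) := by
    simpa only [inv_div] using one_sub_inv_le_log_of_pos (div_pos hm hβ)
  have hlog_split : log (1 / β) = log (1 / m) + log (m / β) := by
    rw [← log_mul (by positivity) (by positivity)]
    field_simp
  have hlayer : (m - β) * P ≤ M * log (m / β) :=
    calc (m - β) * P = (1 - β / m) * (m * P) := by field_simp
      _ ≤ log (m / β) * M := by
        gcongr
        exact log_nonneg ((one_le_div hβ).mpr hβm)
      _ = M * log (m / β) := mul_comm _ _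
  rw [hlog_split]
  linarith

theorem sum_mul_le_mul_log_one_div_add {ι : Type*} [DecidableEq ι] (π a : ι → ℝ)
    (hπ : ∀ v, 0 ≤ π v) {M : ℝ} (hM : 0 ≤ M) (T : Finset ι) (ha : ∀ v ∈ T, a v ≤ 1)
    {β : ℝ} (hβ0 : 0 < β) (hβ1 : β ≤ 1)
    (hlevel : ∀ v ∈ T, β ≤ a v → (∑ u ∈ T with a v ≤ a u, π u) * a v ≤ M) :
    ∑ v ∈ T, π v * a v ≤ M * log (1 / β) + β * ∑ v ∈ T, π v := by
  induction T using Finset.induction_on_min_value a generalizing β with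
  | empty =>
    simpa using mul_nonneg hM (log_nonneg (one_le_one_div hβ0 hβ1))
  | insert x s hxs hmin ih =>
    have hlevel_s : ∀ v ∈ s, β ≤ a v → (∑ u ∈ s with a v ≤ a u, π u) * a v ≤ M := by
      intro v hv hβv
      refine le_trans ?_ (hlevel v (mem_insert_of_mem hv) hβv)
      gcongr
      · exact hβ0.le.trans hβv
      · exact fun u _ _ => hπ u
      · exact subset_insert x s
    rw [sum_insert hxs, sum_insert hxs]
    rcases lt_or_ge (a x) β with hxβ | hβx
    · have hs := ih (fun v hv => ha v (mem_insert_of_mem hv)) hβ0 hβ1 hlevel_s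
      have hx : π x * a x ≤ π x * β := mul_le_mul_of_nonneg_left hxβ.le (hπ x)
      linarith
    · have hs := ih (fun v hv => ha v (mem_insert_of_mem hv)) (hβ0.trans_le hβx)
        (ha x (mem_insert_self x s)) fun v hv _ => hlevel_s v hv (hβx.trans (hmin v hv))
      have hx := hlevel x (mem_insert_self x s) hβx
      rw [filter_true_of_mem fun u hu => (mem_insert.mp hu).elim (fun h => h ▸ le_rfl) (hmin u),
        sum_insert hxs, mul_comm] at hx
      have hlayer := mul_add_mul_log_one_div_le hβ0 hβx
        (add_nonneg (hπ x) (sum_nonneg fun u _ => hπ u)) hx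
      linarith

lemma log_le_two_mul_logb_two {x : ℝ} (hx : 1 ≤ x) : log x ≤ 2 * logb 2 x := by
  have hlogx : 0 ≤ log x := log_nonneg hx
  have hlogb : log x ≤ logb 2 x :=
    le_div_self hlogx (log_pos one_lt_two) (by linarith [log_two_lt_d9])
  linarith

/-- Exponential binning lemma: for values `a v ∈ [0,1]`, a probability distribution `π` on
`Fin k`, and `β ∈ (0,1]`, there is a subset `S` with
`π(S) · min_{v ∈ S} a v ≥ (∑ v π v * a v - β) / (2 log₂(1/β))`. -/
theorem exponential_binning (k : ℕ) (a : Fin k → ℝ) (ha : ∀ v, a v ∈ Set.Icc (0 : ℝ) 1)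
    (π : Fin k → ℝ) (hπ0 : ∀ v, 0 ≤ π v) (hπ1 : ∑ v, π v = 1)
    (β : ℝ) (hβ : β ∈ Set.Ioc (0 : ℝ) 1) :
    ∃ S : Finset (Fin k), ∃ hS : S.Nonempty,
      (∑ v ∈ S, π v) * S.inf' hS a ≥
        (∑ v, π v * a v - β) / (2 * Real.logb 2 (1 / β)) := by
  obtain ⟨hβ0, hβ1⟩ := hβ
  obtain ⟨v, -, -⟩ := exists_ne_zero_of_sum_ne_zero (hπ1.trans_ne one_ne_zero)
  have hk : (univ : Finset (Fin k)).Nonempty := ⟨v, mem_univ v⟩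
  let level : Fin k → ℝ := fun v => (∑ u with a v ≤ a u, π u) * a v
  obtain ⟨v₀, -, hv₀⟩ := univ.exists_mem_eq_sup' hk level
  set M := univ.sup' hk level
  have hM : 0 ≤ M := hv₀ ▸ mul_nonneg (sum_nonneg fun u _ => hπ0 u) (ha v₀).1
  set S : Finset (Fin k) := {u | a v₀ ≤ a u}
  have hS : S.Nonempty := ⟨v₀, by simp [S]⟩
  have hM_le : M ≤ (∑ u ∈ S, π u) * S.inf' hS a :=
    hv₀ ▸ mul_le_mul_of_nonneg_left (le_inf' hS _ fun u hu => (mem_filter.mp hu).2)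
      (sum_nonneg fun u _ => hπ0 u)
  refine ⟨S, hS, le_trans ?_ hM_le⟩
  have hsum := sum_mul_le_mul_log_one_div_add π a hπ0 hM univ (fun v _ => (ha v).2) hβ0 hβ1
    fun v _ _ => le_sup' level (mem_univ v)
  rw [hπ1, mul_one] at hsum
  have hβ_inv : 1 ≤ 1 / β := one_le_one_div hβ0 hβ1
  refine div_le_of_le_mul₀ (mul_nonneg zero_le_two (logb_nonneg one_lt_two hβ_inv)) hM ?_
  calc ∑ v, π v * a v - β ≤ M * log (1 / β) := by linarith
    _ ≤ M * (2 * logb 2 (1 / β)) := by gcongr; exact log_le_two_mul_logb_two hβ_inv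
end

section
/- Let $U$ be a real $k \times N$ matrix, and suppose $U = P \widetilde U Q$ where $P \in \mathbb{R}^{k\times k}$ and $Q \in \mathbb{R}^{N \times N}$ are diagonal matrices with $\mathrm{Tr}(P^2) = \mathrm{Tr}(Q^2) = 1$ and $\|\widetilde U\|_{2\to 2} \le t$. Then there exists a set $S \subseteq [k]$ with $|S| \ge k/2$ such that $\sqrt{k/2}\, \|\Pi_S U\|_{\infty \to 2} \le t$, where $\Pi_S$ is the coordinate projection onto the rows indexed by $S$. -/
open scoped BigOperators

/-- Maximum ℓ₂ norm of a row. -/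
noncomputable def rowNorm {ι d : Type*} [Fintype d] (R : Matrix ι d ℝ) : ℝ :=
  ⨆ i, Real.sqrt (∑ j, (R i j) ^ 2)

/-- Maximum ℓ₂ norm of a column. -/
noncomputable def colNorm {d κ : Type*} [Fintype d] (A : Matrix d κ ℝ) : ℝ :=
  ⨆ j, Real.sqrt (∑ i, (A i j) ^ 2)

/-- The γ₂ factorization norm. -/
noncomputable def gamma2 {ι κ : Type*} [Fintype ι] [Fintype κ] (M : Matrix ι κ ℝ) : ℝ :=
  sInf {c | ∃ d : ℕ, ∃ R : Matrix ι (Fin d) ℝ, ∃ A : Matrix (Fin d) κ ℝ,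
    R * A = M ∧ c = rowNorm R * colNorm A}

/-- Maximum absolute entry (the 1→∞ operator norm). -/
noncomputable def linfNorm {ι κ : Type*} (M : Matrix ι κ ℝ) : ℝ :=
  ⨆ i, ⨆ j, |M i j|

/-- The approximate γ₂ norm. -/
noncomputable def gamma2Approx {ι κ : Type*} [Fintype ι] [Fintype κ]
    (W : Matrix ι κ ℝ) (α : ℝ) : ℝ :=
  sInf {c | ∃ W' : Matrix ι κ ℝ, linfNorm (W - W') ≤ α ∧ c = gamma2 W'}

/-- Matrix inner product. -/
def bullet {ι κ : Type*} [Fintype ι] [Fintype κ] (M N : Matrix ι κ ℝ) : ℝ :=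
  ∑ i, ∑ j, M i j * N i j

/-- Entrywise ℓ₁ norm. -/
def l1NormM {ι κ : Type*} [Fintype ι] [Fintype κ] (M : Matrix ι κ ℝ) : ℝ :=
  ∑ i, ∑ j, |M i j|

/-- The dual γ₂ norm. -/
noncomputable def gamma2Star {ι κ : Type*} [Fintype ι] [Fintype κ] (U : Matrix ι κ ℝ) : ℝ :=
  sSup {c | ∃ V : Matrix ι κ ℝ, gamma2 V ≤ 1 ∧ c = bullet U V}

/-- Spectral norm (2→2 operator norm). -/
noncomputable def norm2to2 {ι κ : Type*} [Fintype ι] [Fintype κ] (M : Matrix ι κ ℝ) : ℝ :=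
  sSup {c | ∃ x : κ → ℝ, (∑ j, (x j) ^ 2) ≤ 1 ∧ c = Real.sqrt (∑ i, (M.mulVec x i) ^ 2)}

/-- ∞→2 operator norm. -/
noncomputable def normInfTo2 {ι κ : Type*} [Fintype ι] [Fintype κ] (M : Matrix ι κ ℝ) : ℝ :=
  sSup {c | ∃ x : κ → ℝ, (∀ j, |x j| ≤ 1) ∧ c = Real.sqrt (∑ i, (M.mulVec x i) ^ 2)}

/-- Coordinate projection onto the rows indexed by `S`, as a matrix. -/
def projMat {k : ℕ} (S : Finset (Fin k)) : Matrix (Fin k) (Fin k) ℝ :=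
  Matrix.of fun i j => if i = j ∧ i ∈ S then 1 else 0

/-!
Let `S` be the rows `i` with `P_ii² ≤ 2/k`; since `∑ P_ii² = 1`, Markov's inequality gives
`|S| ≥ k/2`. For `‖x‖_∞ ≤ 1` we have `‖Qx‖₂² ≤ ∑ Q_jj² = 1`, so `‖Ũ Q x‖₂ ≤ t`, and on the rows
of `S` the factor `P` shrinks squared entries by at most `2/k`, whence `‖Π_S P Ũ Q x‖₂ ≤ t √(2/k)`.
-/

open Matrix Finset

lemma card_div_two_le_card_filter_le_two_div {ι : Type*} [Fintype ι] [DecidableEq ι]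
    (f : ι → ℝ) (hf : ∀ i, 0 ≤ f i) (hsum : ∑ i, f i = 1) :
    (Fintype.card ι : ℝ) / 2 ≤ #(univ.filter fun i => f i ≤ 2 / Fintype.card ι) := by
  set n : ℝ := (Fintype.card ι : ℝ)
  set S := univ.filter fun i => f i ≤ 2 / n
  have hn : 0 < n := by
    have : Nonempty ι := by
      by_contra h
      simp [not_nonempty_iff.mp h] at hsum
    exact Nat.cast_pos.mpr Fintype.card_pos
  have hmarkov : (#Sᶜ : ℝ) * (2 / n) ≤ 1 := calc
    (#Sᶜ : ℝ) * (2 / n) = #Sᶜ • (2 / n) := (nsmul_eq_mul _ _).symm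
    _ ≤ ∑ i ∈ Sᶜ, f i := card_nsmul_le_sum _ _ _ fun i hi => by
      simp only [S, mem_compl, mem_filter, mem_univ, true_and, not_le] at hi
      exact hi.le
    _ ≤ ∑ i, f i := sum_le_sum_of_subset_of_nonneg (subset_univ _) fun i _ _ => hf i
    _ = 1 := hsum
  have hcard : (#S : ℝ) + #Sᶜ = n := by rw [← Nat.cast_add, card_add_card_compl]
  rw [mul_div_assoc', div_le_one hn] at hmarkov
  linarith

section Norms

variable {ι κ : Type*} [Fintype ι] [Fintype κ]

lemma sqrt_sum_sq_mulVec_le_norm2to2 (M : Matrix ι κ ℝ) {x : κ → ℝ}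
    (hx : ∑ j, x j ^ 2 ≤ 1) : √(∑ i, (M *ᵥ x) i ^ 2) ≤ norm2to2 M := by
  refine le_csSup ⟨√(∑ i, ∑ j, M i j ^ 2), ?_⟩ ⟨x, hx, rfl⟩
  rintro c ⟨y, hy, rfl⟩
  gcongr with i
  calc (M *ᵥ y) i ^ 2 ≤ (∑ j, M i j ^ 2) * ∑ j, y j ^ 2 :=
        sum_mul_sq_le_sq_mul_sq univ (M i) y
    _ ≤ ∑ j, M i j ^ 2 := mul_le_of_le_one_right (by positivity) hy

lemma norm2to2_nonneg (M : Matrix ι κ ℝ) : 0 ≤ norm2to2 M :=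
  (Real.sqrt_nonneg _).trans (sqrt_sum_sq_mulVec_le_norm2to2 M (x := 0) (by simp))

lemma normInfTo2_le {M : Matrix ι κ ℝ} {c : ℝ} (hc : 0 ≤ c)
    (h : ∀ x : κ → ℝ, (∀ j, |x j| ≤ 1) → ∑ i, (M *ᵥ x) i ^ 2 ≤ c ^ 2) :
    normInfTo2 M ≤ c := by
  refine Real.sSup_le ?_ hc
  rintro _ ⟨x, hx, rfl⟩
  exact Real.sqrt_le_left hc |>.mpr (h x hx)

variable [DecidableEq κ]

lemma sum_sq_diagonal_mulVec_le (q : κ → ℝ) {x : κ → ℝ} (hx : ∀ j, |x j| ≤ 1) :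
    ∑ j, (diagonal q *ᵥ x) j ^ 2 ≤ ∑ j, q j ^ 2 := by
  refine sum_le_sum fun j _ => ?_
  rw [mulVec_diagonal, mul_pow]
  exact mul_le_of_le_one_right (sq_nonneg _) (sq_le_one_iff_abs_le_one _ |>.mpr (hx j))

end Norms

lemma projMat_mulVec_apply {k : ℕ} (S : Finset (Fin k)) (v : Fin k → ℝ) (i : Fin k) :
    (projMat S *ᵥ v) i = if i ∈ S then v i else 0 := by
  simp only [mulVec, dotProduct, projMat, of_apply, ite_mul, one_mul, zero_mul]
  rw [sum_eq_single i (fun j _ hj => by simp [Ne.symm hj]) (by simp)]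
  simp

lemma sum_sq_projMat_diagonal_mulVec_le {k : ℕ} (S : Finset (Fin k)) (p : Fin k → ℝ)
    {c : ℝ} (hc : 0 ≤ c) (hS : ∀ i ∈ S, p i ^ 2 ≤ c) (z : Fin k → ℝ) :
    ∑ i, (projMat S *ᵥ (diagonal p *ᵥ z)) i ^ 2 ≤ c * ∑ i, z i ^ 2 := by
  rw [mul_sum]
  gcongr with i
  rw [projMat_mulVec_apply, mulVec_diagonal]
  split_ifs with hi
  · rw [mul_pow]
    exact mul_le_mul_of_nonneg_right (hS i hi) (sq_nonneg _)
  · rw [zero_pow two_ne_zero]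
    positivity

/-- If `U = P Ũ Q` with `P, Q` diagonal, `Tr(P²) = Tr(Q²) = 1` and `‖Ũ‖_{2→2} ≤ t`, then
there is a set `S` of at least half the rows with `√(k/2) ‖Π_S U‖_{∞→2} ≤ t`. -/
theorem gammastar_inftyTo2 (k N : ℕ) (t : ℝ) (U Ut : Matrix (Fin k) (Fin N) ℝ)
    (P : Matrix (Fin k) (Fin k) ℝ) (Q : Matrix (Fin N) (Fin N) ℝ)
    (hP : P.IsDiag) (hQ : Q.IsDiag)
    (hPtr : (P * P).trace = 1) (hQtr : (Q * Q).trace = 1)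
    (hU : U = P * Ut * Q) (ht : norm2to2 Ut ≤ t) :
    ∃ S : Finset (Fin k), (k : ℝ) / 2 ≤ S.card ∧
      Real.sqrt ((k : ℝ) / 2) * normInfTo2 (projMat S * U) ≤ t := by
  obtain ⟨p, rfl⟩ : ∃ p, P = diagonal p := ⟨_, hP.diagonal_diag.symm⟩
  obtain ⟨q, rfl⟩ : ∃ q, Q = diagonal q := ⟨_, hQ.diagonal_diag.symm⟩
  rw [diagonal_mul_diagonal, trace_diagonal] at hPtr hQtr
  simp only [← sq] at hPtr hQtr
  have hk : (0 : ℝ) < k := by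
    rcases Nat.eq_zero_or_pos k with rfl | hk
    · simp at hPtr
    · exact_mod_cast hk
  have ht0 : 0 ≤ t := (norm2to2_nonneg Ut).trans ht
  set S := univ.filter fun i => p i ^ 2 ≤ 2 / k
  have hcard : (k : ℝ) / 2 ≤ #S := by
    simpa using card_div_two_le_card_filter_le_two_div _ (fun i => sq_nonneg (p i)) hPtr
  refine ⟨S, hcard, ?_⟩
  rw [← le_div_iff₀' (by positivity)]
  refine normInfTo2_le (by positivity) fun x hx => ?_
  have hUt : ∑ i, (Ut *ᵥ (diagonal q *ᵥ x)) i ^ 2 ≤ t ^ 2 :=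
    (Real.sqrt_le_left ht0).mp <| (sqrt_sum_sq_mulVec_le_norm2to2 Ut <|
      (sum_sq_diagonal_mulVec_le q hx).trans hQtr.le).trans ht
  calc ∑ i, ((projMat S * U) *ᵥ x) i ^ 2
      = ∑ i, (projMat S *ᵥ (diagonal p *ᵥ (Ut *ᵥ (diagonal q *ᵥ x)))) i ^ 2 := by
        simp only [hU, ← mulVec_mulVec]
    _ ≤ 2 / k * ∑ i, (Ut *ᵥ (diagonal q *ᵥ x)) i ^ 2 :=
        sum_sq_projMat_diagonal_mulVec_le S p (by positivity)
          (fun i hi => (mem_filter.mp hi).2) _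
    _ ≤ 2 / k * t ^ 2 := by gcongr
    _ = (t / √(k / 2)) ^ 2 := by
        rw [div_pow, Real.sq_sqrt (by positivity)]
        field_simp
end

section
/- Let $W \in \mathbb{R}^{\mathcal{Q} \times \mathcal{X}}$ be a symmetric workload matrix with positive part $W^+$ (columns indexed by $\mathcal{X}^+$), and let $\alpha \ge 0$. Then $\gamma_2(W,\alpha) = \gamma_2(W^+,\alpha)$. -/
open scoped BigOperators

/-! `W⁺` is `W` with the columns `inr x` deleted, and by symmetry `W` is `W⁺` with every column
repeated with sign `-1`. Both are instances of `M ↦ M.submatrix id f * diagonal s` with `|s| ≤ 1`,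
which is additive and increases neither the maximal entry nor `γ₂`: a factorization `R * A` of `M`
gives the factorization `R * (A.submatrix id f * diagonal s)`, whose columns are no longer. So it
maps `α`-approximations to `α`-approximations, and the two approximate `γ₂` norms bound each
other. -/

open Matrix

section Norms

variable {ι κ κ' d : Type*}

lemma rowNorm_nonneg [Fintype d] (R : Matrix ι d ℝ) : 0 ≤ rowNorm R :=
  Real.iSup_nonneg fun _ => Real.sqrt_nonneg _

lemma colNorm_nonneg [Fintype d] (A : Matrix d κ ℝ) : 0 ≤ colNorm A :=
  Real.iSup_nonneg fun _ => Real.sqrt_nonneg _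

lemma linfNorm_nonneg (M : Matrix ι κ ℝ) : 0 ≤ linfNorm M :=
  Real.iSup_nonneg fun _ => Real.iSup_nonneg fun _ => abs_nonneg _

lemma abs_le_linfNorm [Finite ι] [Finite κ] (M : Matrix ι κ ℝ) (i : ι) (j : κ) :
    |M i j| ≤ linfNorm M :=
  (le_ciSup (f := fun j => |M i j|) (Finite.bddAbove_range _) j).trans
    (le_ciSup (f := fun i => ⨆ j, |M i j|) (Finite.bddAbove_range _) i)

lemma linfNorm_le {M : Matrix ι κ ℝ} {c : ℝ} (hc : 0 ≤ c) (h : ∀ i j, |M i j| ≤ c) :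
    linfNorm M ≤ c :=
  Real.iSup_le (fun i => Real.iSup_le (h i) hc) hc

lemma linfNorm_submatrix_mul_diagonal_le [Finite ι] [Finite κ] [Fintype κ'] [DecidableEq κ']
    (M : Matrix ι κ ℝ) (f : κ' → κ) {s : κ' → ℝ} (hs : ∀ j, |s j| ≤ 1) :
    linfNorm (M.submatrix id f * diagonal s) ≤ linfNorm M :=
  linfNorm_le (linfNorm_nonneg M) fun i j => by
    rw [mul_diagonal, submatrix_apply, id, abs_mul]
    exact mul_le_of_le_one_right (abs_nonneg _) (hs j) |>.trans (abs_le_linfNorm M i (f j))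

lemma colNorm_submatrix_mul_diagonal_le [Fintype d] [Finite κ] [Fintype κ'] [DecidableEq κ']
    (A : Matrix d κ ℝ) (f : κ' → κ) {s : κ' → ℝ} (hs : ∀ j, |s j| ≤ 1) :
    colNorm (A.submatrix id f * diagonal s) ≤ colNorm A := by
  refine Real.iSup_le (fun j => ?_) (colNorm_nonneg A)
  have hcol : ∑ k, ((A.submatrix id f * diagonal s) k j) ^ 2 ≤ ∑ k, (A k (f j)) ^ 2 := by
    have hs2 : s j ^ 2 ≤ 1 := (sq_le_one_iff_abs_le_one _).2 (hs j)
    refine Finset.sum_le_sum fun k _ => ?_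
    rw [mul_diagonal, submatrix_apply, id, mul_pow]
    exact mul_le_of_le_one_right (sq_nonneg _) hs2
  exact (Real.sqrt_le_sqrt hcol).trans
    (le_ciSup (f := fun j => Real.sqrt (∑ k, (A k j) ^ 2)) (Finite.bddAbove_range _) (f j))

end Norms

section Gamma2

variable {ι κ κ' : Type*} [Fintype ι]

lemma gamma2_le_of_mul_eq [Fintype κ] {d : ℕ} {M : Matrix ι κ ℝ} (R : Matrix ι (Fin d) ℝ)
    (A : Matrix (Fin d) κ ℝ) (h : R * A = M) : gamma2 M ≤ rowNorm R * colNorm A :=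
  csInf_le ⟨0, by
    rintro c ⟨d, R, A, -, rfl⟩
    exact mul_nonneg (rowNorm_nonneg R) (colNorm_nonneg A)⟩ ⟨d, R, A, h, rfl⟩

lemma gamma2_factorizations_nonempty (M : Matrix ι κ ℝ) :
    {c | ∃ d : ℕ, ∃ R : Matrix ι (Fin d) ℝ, ∃ A : Matrix (Fin d) κ ℝ,
      R * A = M ∧ c = rowNorm R * colNorm A}.Nonempty := by
  classical
  let e := Fintype.equivFin ι
  refine ⟨_, Fintype.card ι, (1 : Matrix ι ι ℝ).submatrix id e.symm, M.submatrix e.symm id, ?_,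
    rfl⟩
  rw [submatrix_mul_equiv, Matrix.one_mul, submatrix_id_id]

lemma gamma2_nonneg [Fintype κ] (M : Matrix ι κ ℝ) : 0 ≤ gamma2 M :=
  Real.sInf_nonneg <| by
    rintro c ⟨d, R, A, -, rfl⟩
    exact mul_nonneg (rowNorm_nonneg R) (colNorm_nonneg A)

lemma gamma2_submatrix_mul_diagonal_le [Fintype κ] [Fintype κ'] [DecidableEq κ']
    (M : Matrix ι κ ℝ) (f : κ' → κ) {s : κ' → ℝ} (hs : ∀ j, |s j| ≤ 1) :
    gamma2 (M.submatrix id f * diagonal s) ≤ gamma2 M := by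
  refine le_csInf (gamma2_factorizations_nonempty M) ?_
  rintro c ⟨d, R, A, hRA, rfl⟩
  have hfac : R * (A.submatrix id f * diagonal s) = M.submatrix id f * diagonal s := by
    rw [← Matrix.mul_assoc, ← hRA, submatrix_mul R A id id f Function.bijective_id, submatrix_id_id]
  calc gamma2 (M.submatrix id f * diagonal s)
      ≤ rowNorm R * colNorm (A.submatrix id f * diagonal s) := gamma2_le_of_mul_eq R _ hfac
    _ ≤ rowNorm R * colNorm A :=
      mul_le_mul_of_nonneg_left (colNorm_submatrix_mul_diagonal_le A f hs) (rowNorm_nonneg R)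

lemma gamma2Approx_le_gamma2 [Fintype κ] {W W' : Matrix ι κ ℝ} {α : ℝ}
    (h : linfNorm (W - W') ≤ α) :
    gamma2Approx W α ≤ gamma2 W' :=
  csInf_le ⟨0, by rintro c ⟨V, -, rfl⟩; exact gamma2_nonneg V⟩ ⟨W', h, rfl⟩

lemma gamma2Approx_submatrix_mul_diagonal_le [Fintype κ] [Fintype κ'] [DecidableEq κ']
    (W : Matrix ι κ ℝ) {α : ℝ} (hα : 0 ≤ α) (f : κ' → κ) {s : κ' → ℝ} (hs : ∀ j, |s j| ≤ 1) :
    gamma2Approx (W.submatrix id f * diagonal s) α ≤ gamma2Approx W α := by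
  have hW : linfNorm (W - W) ≤ α := by rw [sub_self]; exact linfNorm_le hα fun _ _ => by simp [hα]
  refine le_csInf ⟨_, W, hW, rfl⟩ ?_
  rintro c ⟨V, hV, rfl⟩
  have hclose : linfNorm (W.submatrix id f * diagonal s - V.submatrix id f * diagonal s) ≤ α := by
    rw [← Matrix.sub_mul]
    change linfNorm ((W - V).submatrix id f * diagonal s) ≤ α
    exact (linfNorm_submatrix_mul_diagonal_le (W - V) f hs).trans hV
  exact (gamma2Approx_le_gamma2 hclose).trans (gamma2_submatrix_mul_diagonal_le V f hs)

end Gamma2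

/-- For a symmetric workload matrix, the approximate γ₂ norm equals that of its positive part. -/
theorem gamma2Approx_symmetric {Q X : Type*} [Fintype Q] [Fintype X]
    (W : Matrix Q (X ⊕ X) ℝ) (α : ℝ) (hα : 0 ≤ α)
    (hsym : ∀ q x, W q (Sum.inr x) = - W q (Sum.inl x)) :
    gamma2Approx W α = gamma2Approx (Matrix.of fun q x => W q (Sum.inl x)) α := by
  classical
  set Wp : Matrix Q X ℝ := Matrix.of fun q x => W q (Sum.inl x)
  have hW : W = Wp.submatrix id (Sum.elim id id) *
      diagonal (Sum.elim (fun _ => (1 : ℝ)) fun _ => -1 : X ⊕ X → ℝ) := by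
    ext q (x | x) <;> simp [Wp, hsym]
  have hsign : ∀ x : X ⊕ X, |Sum.elim (fun _ => (1 : ℝ)) (fun _ => -1) x| ≤ 1 := by
    rintro (x | x) <;> simp
  apply le_antisymm
  · conv_lhs => rw [hW]
    exact gamma2Approx_submatrix_mul_diagonal_le Wp hα _ hsign
  · have h := gamma2Approx_submatrix_mul_diagonal_le W hα Sum.inl (s := fun _ : X => (1 : ℝ))
      fun _ => by simp
    rwa [diagonal_one, Matrix.mul_one] at h
end
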